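/- arXiv:1711.06599 — 4 statements merged into one kernel-verified Lean document; each statement's English description precedes it below -/
import Mathlib

section
/- Let f ∈ ℚ[T] be a monic squarefree polynomial with roots α₁,…,α_r in ℚ̄ and let t be the image of T in E_f = ℚ[T]/(f). Then E_f is a finite product of number fields and there exists an integer n₀ ≥ 1 such that the intersection of the subrings ℚ[t^n] over all n ≥ 1 equals ℚ[t^{n₀}]. -/
/-!
A squarefree `f` generates a radical ideal, so `E_f` is a reduced finite-dimensional `ℚ`-algebra,
hence a reduced Artinian ring: the product of its residue fields at the maximal ideals, each of
which embeds into `ℂ`.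

For the intersection, `ℚ[t^{mn}] ⊆ ℚ[t^m] ∩ ℚ[t^n]`. Choosing `n₀` with `ℚ[t^{n₀}]` of least
dimension, `ℚ[t^{n₀ n}] ⊆ ℚ[t^{n₀}]` forces equality, so `ℚ[t^{n₀}] ⊆ ℚ[t^n]` for every `n ≥ 1`.
-/

open Polynomial

theorem isReduced_quotient_span_singleton {R : Type*} [CommRing R] [DecompositionMonoid R]
    {f : R} (hf : Squarefree f) : IsReduced (R ⧸ Ideal.span {f}) :=
  (Ideal.isRadical_iff_quotient_reduced _).mp (isRadical_iff_span_singleton.mp hf.isRadical)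

theorem exists_subfield_complex_ringEquiv (K : Type*) [Field K] [Algebra ℚ K]
    [FiniteDimensional ℚ K] :
    ∃ L : Subfield ℂ, FiniteDimensional ℚ L ∧ Nonempty (K ≃+* L) := by
  let e := (IsAlgClosed.lift : K →ₐ[ℚ] ℂ).toRingHom.rangeRestrictFieldEquiv
  exact ⟨_, .of_surjective e.toRatAlgEquiv.toLinearMap e.surjective, ⟨e⟩⟩

theorem exists_ringEquiv_pi_subfield_complex (R : Type) [CommRing R] [IsReduced R]
    [Algebra ℚ R] [FiniteDimensional ℚ R] :
    ∃ (ι : Type) (_ : Fintype ι) (K : ι → Subfield ℂ),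
      (∀ i, FiniteDimensional ℚ (K i)) ∧ Nonempty (R ≃+* ((i : ι) → K i)) := by
  have : IsArtinianRing R := .of_finite ℚ R
  have residue_field_embeds (I : MaximalSpectrum R) :
      ∃ L : Subfield ℂ, FiniteDimensional ℚ L ∧ Nonempty (R ⧸ I.asIdeal ≃+* L) :=
    letI := Ideal.Quotient.field I.asIdeal
    have : FiniteDimensional ℚ (R ⧸ I.asIdeal) :=
      .of_surjective (Ideal.Quotient.mkₐ ℚ I.asIdeal).toLinearMap Ideal.Quotient.mk_surjective
    exists_subfield_complex_ringEquiv _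
  choose K hK e using residue_field_embeds
  exact ⟨_, .ofFinite _, K, hK, ⟨(IsArtinianRing.equivPi R).toRingEquiv.trans
    (RingEquiv.piCongrRight fun I ↦ (e I).some)⟩⟩

namespace Algebra

theorem adjoin_pow_mul_le {R A : Type*} [CommSemiring R] [Semiring A] [Algebra R A]
    (t : A) (m n : ℕ) : adjoin R {t ^ (m * n)} ≤ adjoin R {t ^ m} := by
  rw [adjoin_le_iff, Set.singleton_subset_iff, pow_mul]
  exact pow_mem (subset_adjoin (Set.mem_singleton _)) n

theorem exists_adjoin_pow_eq_iInf {K A : Type*} [Field K] [Ring A] [Algebra K A]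
    [FiniteDimensional K A] (t : A) :
    ∃ n₀ : ℕ, 1 ≤ n₀ ∧ (⨅ (n : ℕ) (_ : 1 ≤ n), adjoin K {t ^ n}) = adjoin K {t ^ n₀} := by
  obtain ⟨n₀, hn₀, hmin⟩ := (measure fun n ↦ Module.finrank K (adjoin K {t ^ n})).wf.has_min
    {n | 1 ≤ n} ⟨1, le_rfl⟩
  refine ⟨n₀, hn₀, le_antisymm (iInf₂_le n₀ hn₀) (le_iInf₂ fun n hn ↦ ?_)⟩
  have heq : adjoin K {t ^ (n₀ * n)} = adjoin K {t ^ n₀} :=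
    Subalgebra.eq_of_le_of_finrank_le (adjoin_pow_mul_le t n₀ n)
      (not_lt.mp (hmin _ (Nat.mul_le_mul hn₀ hn : 1 * 1 ≤ n₀ * n)))
  rw [← heq, mul_comm]
  exact adjoin_pow_mul_le t n n₀

end Algebra

theorem stmt_10_general (f : ℚ[X]) (hsqfree : Squarefree f) :
    (∃ (ι : Type) (_ : Fintype ι) (K : ι → Subfield ℂ),
      (∀ i, FiniteDimensional ℚ (K i)) ∧
      Nonempty ((ℚ[X] ⧸ Ideal.span {f}) ≃+* ((i : ι) → K i))) ∧
    (∃ n₀ : ℕ, 1 ≤ n₀ ∧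
      (⨅ (n : ℕ) (_ : 1 ≤ n),
          Algebra.adjoin ℚ {(Ideal.Quotient.mk (Ideal.span {f}) X) ^ n}) =
        Algebra.adjoin ℚ {(Ideal.Quotient.mk (Ideal.span {f}) X) ^ n₀}) := by
  have : FiniteDimensional ℚ (ℚ[X] ⧸ Ideal.span {f}) :=
    (AdjoinRoot.powerBasis hsqfree.ne_zero).finite
  have := isReduced_quotient_span_singleton hsqfree
  exact ⟨exists_ringEquiv_pi_subfield_complex _, Algebra.exists_adjoin_pow_eq_iInf _⟩

/-- For a monic squarefree `f ∈ ℚ[T]`, the algebra `E_f = ℚ[T]/(f)` is a finite product of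
number fields, and, `t` being the class of `T`, there is an integer `n₀ ≥ 1` such that the
intersection of the subalgebras `ℚ[tⁿ]` for all `n ≥ 1` equals `ℚ[t^{n₀}]`. -/
theorem stmt_10 (f : ℚ[X]) (hmonic : f.Monic) (hsqfree : Squarefree f) :
    (∃ (ι : Type) (_ : Fintype ι) (K : ι → Subfield ℂ),
      (∀ i, FiniteDimensional ℚ (K i)) ∧
      Nonempty ((ℚ[X] ⧸ Ideal.span {f}) ≃+* ((i : ι) → K i))) ∧
    (∃ n₀ : ℕ, 1 ≤ n₀ ∧
      (⨅ (n : ℕ) (_ : 1 ≤ n),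
          Algebra.adjoin ℚ {(Ideal.Quotient.mk (Ideal.span {f}) X) ^ n}) =
        Algebra.adjoin ℚ {(Ideal.Quotient.mk (Ideal.span {f}) X) ^ n₀}) :=
  stmt_10_general f hsqfree
end

section
/- Let f ∈ ℚ[T] be a monic squarefree polynomial with roots α₁,…,α_r ∈ ℚ̄, and t the class of T in E_f = ℚ[T]/(f). Then ℚ[t^n] = E_f for all n ≥ 1 if and only if for all i ≠ j with α_j ≠ 0, the ratio α_i/α_j is not a root of unity. -/
/-!
Both sides say that `α ↦ αⁿ` is injective on the roots of `f` for every `n ≥ 1`: for `β ≠ 0`,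
`αⁿ = βⁿ` means `(α / β)ⁿ = 1`, and `αⁿ = 0ⁿ` forces `α = 0`. If `αⁿ = βⁿ` for distinct roots,
the evaluations `E_f → ℂ` at `α` and at `β` agree on `ℚ[tⁿ]` but not at `t`. Conversely, if the
`αⁿ` are distinct, the minimal polynomial of `tⁿ` vanishes at `deg f` distinct numbers (`f` is
separable), so `ℚ[tⁿ]` has dimension `deg f = dim E_f`.
-/

open Polynomial

theorem Subalgebra.eq_top_of_finrank_le {K A : Type*} [Field K] [Ring A] [Algebra K A]
    [FiniteDimensional K A] (S : Subalgebra K A) (h : Module.finrank K A ≤ Module.finrank K S) :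
    S = ⊤ :=
  Algebra.toSubmodule_eq_top.mp <| Submodule.eq_top_of_finrank_eq <|
    (Submodule.finrank_le _).antisymm (by rwa [Subalgebra.finrank_toSubmodule])

theorem forall_injOn_pow_iff_forall_div_pow_ne_one {G₀ : Type*} [CommGroupWithZero G₀]
    (s : Set G₀) :
    (∀ n : ℕ, 1 ≤ n → s.InjOn (· ^ n)) ↔
      ∀ α ∈ s, ∀ β ∈ s, α ≠ β → β ≠ 0 → ¬ ∃ m : ℕ, 1 ≤ m ∧ (α / β) ^ m = 1 := by
  constructor
  · rintro h α hα β hβ hne hβ0 ⟨m, hm, hpow⟩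
    rw [div_pow, div_eq_one_iff_eq (pow_ne_zero m hβ0)] at hpow
    exact hne (h m hm hα hβ hpow)
  · intro h n hn α hα β hβ (hpow : α ^ n = β ^ n)
    by_contra hne
    by_cases hβ0 : β = 0
    · subst hβ0
      rw [zero_pow (by omega), pow_eq_zero_iff (by omega)] at hpow
      exact hne hpow
    · exact h α hα β hβ hne hβ0 ⟨n, hn, by rw [div_pow, hpow, div_self (pow_ne_zero n hβ0)]⟩

namespace AdjoinRoot

section

variable {R A : Type*} [CommRing R] [CommRing A] [Algebra R A] {f : R[X]}

theorem exists_algHom_root_eq {α : A} (hα : aeval α f = 0) :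
    ∃ φ : AdjoinRoot f →ₐ[R] A, φ (root f) = α :=
  ⟨liftAlgHom f (Algebra.ofId R A) α hα, liftAlgHom_root ..⟩

theorem eq_of_pow_eq_of_adjoin_root_pow_eq_top {n : ℕ} (h : Algebra.adjoin R {root f ^ n} = ⊤)
    {α β : A} (hα : aeval α f = 0) (hβ : aeval β f = 0) (hαβ : α ^ n = β ^ n) : α = β := by
  obtain ⟨φ, rfl⟩ := exists_algHom_root_eq hα
  obtain ⟨ψ, rfl⟩ := exists_algHom_root_eq hβ
  have : φ = ψ := AlgHom.ext_of_adjoin_eq_top h (by rintro _ rfl; simpa using hαβ)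
  rw [this]

end

variable {K L : Type*} [Field K] [Field L] [Algebra K L] {f : K[X]}

theorem natDegree_le_natDegree_minpoly_root_pow (hsep : f.Separable)
    (hsplit : (f.map (algebraMap K L)).Splits) {n : ℕ} (hinj : (f.rootSet L).InjOn (· ^ n)) :
    f.natDegree ≤ (minpoly K (root f ^ n)).natDegree := by
  have hint : IsIntegral K (root f ^ n) := (isIntegral_root hsep.ne_zero).pow n
  have hmaps : Set.MapsTo (· ^ n) (f.rootSet L) ((minpoly K (root f ^ n)).rootSet L) := by
    intro α hα
    obtain ⟨φ, rfl⟩ := exists_algHom_root_eq (mem_rootSet.mp hα).2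
    rw [mem_rootSet_of_ne (minpoly.ne_zero hint)]
    simpa using minpoly.aeval_algHom K φ (root f ^ n)
  calc f.natDegree = (f.rootSet L).ncard := by
        rw [← Nat.card_coe_set_eq, Nat.card_eq_fintype_card, card_rootSet_eq_natDegree hsep hsplit]
    _ = ((· ^ n) '' f.rootSet L).ncard := hinj.ncard_image.symm
    _ ≤ ((minpoly K (root f ^ n)).rootSet L).ncard :=
        Set.ncard_le_ncard hmaps.image_subset (rootSet_finite _ _)
    _ ≤ (minpoly K (root f ^ n)).natDegree := ncard_rootSet_le _ _

theorem adjoin_root_pow_eq_top_iff (hsep : f.Separable)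
    (hsplit : (f.map (algebraMap K L)).Splits) (n : ℕ) :
    Algebra.adjoin K {root f ^ n} = ⊤ ↔ (f.rootSet L).InjOn (· ^ n) := by
  have hf : f ≠ 0 := hsep.ne_zero
  refine ⟨fun h α hα β hβ hαβ ↦ eq_of_pow_eq_of_adjoin_root_pow_eq_top h
    (mem_rootSet.mp hα).2 (mem_rootSet.mp hβ).2 hαβ, fun hinj ↦ ?_⟩
  have : FiniteDimensional K (AdjoinRoot f) := (powerBasis hf).finite
  have hint : IsIntegral K (root f ^ n) := (isIntegral_root hf).pow n
  refine Subalgebra.eq_top_of_finrank_le _ ?_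
  rw [(powerBasis hf).finrank, powerBasis_dim, (Algebra.adjoin.powerBasis hint).finrank,
    Algebra.adjoin.powerBasis_dim]
  exact natDegree_le_natDegree_minpoly_root_pow hsep hsplit hinj

end AdjoinRoot

theorem stmt_11_general (f : ℚ[X]) (hsqfree : Squarefree f) :
    (∀ n : ℕ, 1 ≤ n →
        Algebra.adjoin ℚ {(Ideal.Quotient.mk (Ideal.span {f}) X) ^ n} = ⊤) ↔
      ∀ α ∈ (f.map (algebraMap ℚ ℂ)).roots, ∀ β ∈ (f.map (algebraMap ℚ ℂ)).roots,
        α ≠ β → β ≠ 0 → ¬ ∃ m : ℕ, 1 ≤ m ∧ (α / β) ^ m = 1 := by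
  have hsep : f.Separable := PerfectField.separable_iff_squarefree.mpr hsqfree
  have hmem : ∀ α, α ∈ f.rootSet ℂ ↔ α ∈ (f.map (algebraMap ℚ ℂ)).roots := by
    classical
    simp [rootSet_def, aroots_def]
  refine (forall_congr' fun n ↦ imp_congr_right fun _ ↦
    AdjoinRoot.adjoin_root_pow_eq_top_iff (L := ℂ) hsep (IsAlgClosed.splits _) n).trans ?_
  simpa only [hmem] using forall_injOn_pow_iff_forall_div_pow_ne_one (f.rootSet ℂ)

/-- Let `f ∈ ℚ[T]` be monic and squarefree, with roots `α₁, …, α_r` in an algebraic closure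
(here `ℂ`), and let `t` be the class of `T` in `E_f = ℚ[T]/(f)`.  Then `ℚ[tⁿ] = E_f` for all
`n ≥ 1` if and only if for all roots `α ≠ β` with `β ≠ 0`, the ratio `α/β` is not a root of
unity. -/
theorem stmt_11 (f : ℚ[X]) (hmonic : f.Monic) (hsqfree : Squarefree f) :
    (∀ n : ℕ, 1 ≤ n →
        Algebra.adjoin ℚ {(Ideal.Quotient.mk (Ideal.span {f}) X) ^ n} = ⊤) ↔
      ∀ α ∈ (f.map (algebraMap ℚ ℂ)).roots, ∀ β ∈ (f.map (algebraMap ℚ ℂ)).roots,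
        α ≠ β → β ≠ 0 → ¬ ∃ m : ℕ, 1 ≤ m ∧ (α / β) ^ m = 1 :=
  stmt_11_general f hsqfree
end

section
/- For a monic squarefree f ∈ ℚ[T] with nonzero roots α₁,…,α_r, the dimension over ℚ of the subalgebra ℚ[t^n] of E_f = ℚ[T]/(f) equals the number of distinct values among α₁^n,…,α_r^n. -/
set_option synthInstance.maxHeartbeats 1000000
open Polynomial

section aux

lemma aux_fixed_mem_range {K : Type*} [Field K] [Algebra ℚ K] [FiniteDimensional ℚ K]
    [IsGalois ℚ K] (x : K) (hx : ∀ σ : K ≃ₐ[ℚ] K, σ x = x) :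
    x ∈ Set.range (algebraMap ℚ K) := by
  rw [← IntermediateField.mem_bot (F := ℚ)]
  rw [← IsGalois.fixedField_fixingSubgroup (⊥ : IntermediateField ℚ K)]
  exact fun σ => hx σ

end aux

/-- For a monic squarefree `f ∈ ℚ[T]` with nonzero roots `α₁, …, α_r` (in `ℂ`), the dimension
over `ℚ` of the subalgebra `ℚ[tⁿ]` of `E_f = ℚ[T]/(f)` equals the number of distinct values
among `α₁ⁿ, …, α_rⁿ`. -/
theorem stmt_12 (f : ℚ[X]) (hmonic : f.Monic) (hsqfree : Squarefree f)
    (h0 : (0 : ℂ) ∉ (f.map (algebraMap ℚ ℂ)).roots) (n : ℕ) :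
    Module.finrank ℚ
        (Algebra.adjoin ℚ {(Ideal.Quotient.mk (Ideal.span {f}) X) ^ n}) =
      ((f.map (algebraMap ℚ ℂ)).roots.toFinset.image (· ^ n)).card := by
  classical
  have hfne : f ≠ 0 := hmonic.ne_zero
  set t : ℚ[X] ⧸ Ideal.span {f} := Ideal.Quotient.mk (Ideal.span {f}) X with ht
  have haeval : ∀ g : ℚ[X], aeval t g = Ideal.Quotient.mk (Ideal.span {f}) g := by
    intro g
    have := Polynomial.aeval_algHom_apply (Ideal.Quotient.mkₐ ℚ (Ideal.span {f})) X g
    simpa using this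
  have hker : ∀ g : ℚ[X], aeval t g = 0 ↔ f ∣ g := by
    intro g
    rw [haeval, Ideal.Quotient.eq_zero_iff_mem, Ideal.mem_span_singleton]
  have hint : IsIntegral ℚ (t ^ n) := by
    refine IsIntegral.pow ⟨f, hmonic, ?_⟩ n
    rw [← aeval_def]
    exact (hker f).mpr dvd_rfl
  set m := minpoly ℚ (t ^ n) with hm
  have hfr : Module.finrank ℚ (Algebra.adjoin ℚ {t ^ n}) = m.natDegree := by
    rw [Module.finrank_eq_card_basis (Algebra.adjoin.powerBasisAux hint), Fintype.card_fin]
  set Sc := ((f.map (algebraMap ℚ ℂ)).roots.toFinset.image (· ^ n)) with hSc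
  -- Part A : Sc.card ≤ m.natDegree
  have hroots : ∀ α ∈ (f.map (algebraMap ℚ ℂ)).roots, aeval (α ^ n) m = 0 := by
    intro α hα
    rw [mem_roots_map hfne] at hα
    have hα0 : aeval α f = 0 := by rwa [aeval_def]
    have hI : ∀ g ∈ Ideal.span {f}, aeval α g = 0 := by
      intro g hg
      rw [Ideal.mem_span_singleton] at hg
      obtain ⟨c, rfl⟩ := hg
      rw [map_mul, hα0, zero_mul]
    set Ψ : (ℚ[X] ⧸ Ideal.span {f}) →ₐ[ℚ] ℂ :=
      Ideal.Quotient.liftₐ (Ideal.span {f}) (aeval α) hI with hΨ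
    have hΨt : Ψ t = α := by
      rw [ht, hΨ, Ideal.Quotient.liftₐ_apply]
      exact aeval_X α
    have h1 : Ψ (aeval (t ^ n) m) = 0 := by rw [minpoly.aeval, map_zero]
    rw [← Polynomial.aeval_algHom_apply, map_pow, hΨt] at h1
    exact h1
  have hA : Sc.card ≤ m.natDegree := by
    have hm0 : m ≠ 0 := (minpoly.monic hint).ne_zero
    have hsub : Sc ⊆ (m.map (algebraMap ℚ ℂ)).roots.toFinset := by
      intro β hβ
      simp only [hSc, Finset.mem_image, Multiset.mem_toFinset] at hβ ⊢
      obtain ⟨α, hα, rfl⟩ := hβ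
      rw [mem_roots_map hm0, ← aeval_def]
      exact hroots α hα
    calc Sc.card ≤ (m.map (algebraMap ℚ ℂ)).roots.toFinset.card := Finset.card_le_card hsub
      _ ≤ Multiset.card (m.map (algebraMap ℚ ℂ)).roots := Multiset.toFinset_card_le _
      _ ≤ (m.map (algebraMap ℚ ℂ)).natDegree := Polynomial.card_roots' _
      _ = m.natDegree := natDegree_map _
  -- Part B : m.natDegree ≤ SK.card and Sc.card = SK.card
  set K := f.SplittingField with hK
  have hsep : f.Separable := (PerfectField.separable_iff_squarefree).mpr hsqfree
  haveI : IsGalois ℚ K := by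
    haveI : IsSplittingField ℚ K f := Polynomial.IsSplittingField.splittingField f
    exact IsGalois.of_separable_splitting_field hsep
  set RK := (f.map (algebraMap ℚ K)).roots with hRK
  set SK := RK.toFinset.image (· ^ n) with hSK
  set P : K[X] := ∏ β ∈ SK, (X - C β) with hP
  have hPmonic : P.Monic := monic_prod_of_monic _ _ (fun β _ => monic_X_sub_C β)
  have hmemRK : ∀ {α : K}, α ∈ RK ↔ aeval α f = 0 := by
    intro α
    rw [hRK, mem_roots_map hfne, aeval_def]
  have hstab : ∀ σ : K ≃ₐ[ℚ] K, SK.image σ = SK := by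
    intro σ
    apply Finset.eq_of_subset_of_card_le
    · intro β hβ
      simp only [hSK, Finset.mem_image, Multiset.mem_toFinset] at hβ ⊢
      obtain ⟨β', hβ', rfl⟩ := hβ
      obtain ⟨α, hα, rfl⟩ := hβ'
      refine ⟨σ α, ?_, (map_pow σ α n).symm⟩
      rw [hmemRK] at hα ⊢
      rw [Polynomial.aeval_algHom_apply σ α f, hα, map_zero]
    · rw [Finset.card_image_of_injective _ σ.injective]
  have hPcoeff : ∀ i, P.coeff i ∈ Set.range (algebraMap ℚ K) := by
    intro i
    apply aux_fixed_mem_range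
    intro σ
    have hPmap : P.map (σ : K →+* K) = P := by
      conv_rhs => rw [hP, ← hstab σ]
      rw [hP, Polynomial.map_prod]
      simp only [Polynomial.map_sub, Polynomial.map_X, Polynomial.map_C]
      rw [Finset.prod_image (fun x _ y _ h => σ.injective h)]
      rfl
    conv_rhs => rw [← hPmap]
    rw [Polynomial.coeff_map]
    rfl
  obtain ⟨Q, hQ⟩ := (Polynomial.mem_lifts P).mp
    ((Polynomial.lifts_iff_coeff_lifts P).mpr hPcoeff)
  have hPdeg : P.natDegree = SK.card := by
    rw [hP, Polynomial.natDegree_prod _ _ (fun β _ => X_sub_C_ne_zero β)]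
    simp [natDegree_X_sub_C]
  have hQdeg : Q.natDegree = SK.card := by
    rw [← hPdeg, ← hQ, natDegree_map]
  have hnodup : RK.Nodup := nodup_roots (hsep.map)
  have hfsplit : f.map (algebraMap ℚ K) = ∏ α ∈ RK.toFinset, (X - C α) := by
    have h1 := (show Splits (f.map (algebraMap ℚ K)) from SplittingField.splits f).eq_prod_roots_of_monic (hmonic.map (algebraMap ℚ K))
    rw [h1, Finset.prod_eq_multiset_prod]
    congr 1
    rw [Multiset.toFinset_val, Multiset.dedup_eq_self.mpr hnodup]
  have hdvdK : (f.map (algebraMap ℚ K)) ∣ (Q.comp (X ^ n)).map (algebraMap ℚ K) := by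
    rw [hfsplit]
    apply Finset.prod_dvd_of_coprime
    · exact (pairwise_coprime_X_sub_C Function.injective_id).set_pairwise _
    · intro α hα
      rw [Polynomial.map_comp, hQ, Polynomial.map_pow, Polynomial.map_X, dvd_iff_isRoot,
        IsRoot, eval_comp, eval_pow, eval_X, hP, eval_prod]
      apply Finset.prod_eq_zero
        (show α ^ n ∈ SK from Finset.mem_image_of_mem _ hα)
      simp
  have hdvd : f ∣ Q.comp (X ^ n) := by
    rwa [Polynomial.map_dvd_map (algebraMap ℚ K) (algebraMap ℚ K).injective hmonic] at hdvdK
  have hQzero : aeval (t ^ n) Q = 0 := by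
    have h2 : aeval t (Q.comp (X ^ n)) = 0 := (hker _).mpr hdvd
    rwa [aeval_comp, map_pow, aeval_X] at h2
  have hQne : Q ≠ 0 := by
    intro h
    apply hPmonic.ne_zero
    rw [← hQ, h, Polynomial.map_zero]
  have hB : m.natDegree ≤ SK.card := by
    rw [← hQdeg]
    exact Polynomial.natDegree_le_of_dvd (minpoly.dvd ℚ _ hQzero) hQne
  -- card transfer
  have hcard : Sc.card = SK.card := by
    set ρ : K →+* ℂ :=
      (SplittingField.lift f (IsAlgClosed.splits _) : K →ₐ[ℚ] ℂ).toRingHom with hρ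
    have hcomp : ρ.comp (algebraMap ℚ K) = algebraMap ℚ ℂ := by
      rw [hρ]; exact AlgHom.comp_algebraMap _
    have hrootsmap : (f.map (algebraMap ℚ ℂ)).roots = RK.map ρ := by
      rw [hRK, ← (show Splits (f.map (algebraMap ℚ K)) from SplittingField.splits f).roots_map ρ,
        Polynomial.map_map, hcomp]
    have himg : Sc = SK.image ρ := by
      rw [hSc, hrootsmap, Multiset.toFinset_map, hSK, Finset.image_image, Finset.image_image]
      exact Finset.image_congr (fun α _ => (map_pow ρ α n).symm)
    rw [himg, Finset.card_image_of_injective _ ρ.injective]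
  rw [hfr, hcard]
  exact le_antisymm hB (hcard ▸ hA)
end

section
/- Let ℓ and ℓ' be distinct prime numbers and let α, β be nonzero algebraic numbers such that α/β is a root of unity which is congruent to 1 modulo some prime above ℓ and congruent to 1 modulo some prime above ℓ'. Then α = β. -/
/-!
If `u ≠ 1` has finite order, some power `ζ` of `u` is a primitive `q`-th root of unity for a prime
`q`. Reducing `0 = 1 + ζ + ⋯ + ζ ^ (q - 1)` modulo any prime `P` with `ζ ≡ 1 (mod P)` gives
`q ∈ P`, so `P` lies over `q`. Hence `u ≡ 1` modulo primes over `ℓ` and over `ℓ'` forces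
`ℓ = q = ℓ'`.
-/

theorem Nat.Prime.eq_of_natCast_mem {R : Type*} [CommRing R] {I : Ideal R} [I.IsPrime]
    {p q : ℕ} (hp : p.Prime) (hq : q.Prime) (hpI : (p : R) ∈ I) (hqI : (q : R) ∈ I) : p = q := by
  by_contra hpq
  exact Ideal.IsPrime.notMem_of_isCoprime_of_mem ((Nat.coprime_primes hp hq).2 hpq).cast hpI hqI

theorem IsPrimitiveRoot.natCast_mem_of_sub_one_mem {R : Type*} [CommRing R] [IsDomain R]
    {I : Ideal R} {ζ : R} {k : ℕ} (hζ : IsPrimitiveRoot ζ k) (hk : 1 < k) (h : ζ - 1 ∈ I) :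
    (k : R) ∈ I := by
  have hζI : Ideal.Quotient.mk I ζ = 1 := by
    rw [← map_one (Ideal.Quotient.mk I)]
    exact Ideal.Quotient.eq.2 h
  rw [← Ideal.Quotient.eq_zero_iff_mem]
  simpa [hζI] using congrArg (Ideal.Quotient.mk I) (hζ.geom_sum_eq_zero hk)

theorem IsOfFinOrder.eq_one_of_sub_one_mem_of_natCast_mem {R : Type*} [CommRing R] [IsDomain R]
    {P P' : Ideal R} [P.IsPrime] [P'.IsPrime] {ℓ ℓ' : ℕ} (hℓ : ℓ.Prime) (hℓ' : ℓ'.Prime)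
    (hne : ℓ ≠ ℓ') {u : R} (hu : IsOfFinOrder u) (hℓP : (ℓ : R) ∈ P) (huP : u - 1 ∈ P)
    (hℓP' : (ℓ' : R) ∈ P') (huP' : u - 1 ∈ P') : u = 1 := by
  by_contra hu1
  have hn : 1 < orderOf u :=
    lt_of_le_of_ne hu.orderOf_pos (Ne.symm (mt orderOf_eq_one_iff.1 hu1))
  set q := (orderOf u).minFac
  have hq : q.Prime := Nat.minFac_prime hn.ne'
  obtain ⟨c, hc⟩ := (orderOf u).minFac_dvd
  have hζ : IsPrimitiveRoot (u ^ c) q :=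
    (IsPrimitiveRoot.orderOf u).pow hu.orderOf_pos (by rw [hc, mul_comm])
  have hqI : ∀ {I : Ideal R}, u - 1 ∈ I → (q : R) ∈ I := fun h =>
    hζ.natCast_mem_of_sub_one_mem hq.one_lt (Ideal.mem_of_dvd _ (sub_one_dvd_pow_sub_one u c) h)
  exact hne ((hℓ.eq_of_natCast_mem hq hℓP (hqI huP)).trans
    (hq.eq_of_natCast_mem hℓ' (hqI huP') hℓP'))

open NumberField

theorem stmt_14_general (K : Type*) [Field K] [NumberField K] (ℓ ℓ' : ℕ)
    (hℓ : ℓ.Prime) (hℓ' : ℓ'.Prime) (hne : ℓ ≠ ℓ')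
    (α β : K)
    (u : 𝓞 K) (hu : (u : K) = α / β)
    (hroot : ∃ m : ℕ, 1 ≤ m ∧ u ^ m = 1)
    (hP : ∃ P : Ideal (𝓞 K), P.IsMaximal ∧ (ℓ : 𝓞 K) ∈ P ∧ u - 1 ∈ P)
    (hP' : ∃ P' : Ideal (𝓞 K), P'.IsMaximal ∧ (ℓ' : 𝓞 K) ∈ P' ∧ u - 1 ∈ P') :
    α = β := by
  obtain ⟨m, hm, hum⟩ := hroot
  obtain ⟨P, hPmax, hℓP, huP⟩ := hP
  obtain ⟨P', hPmax', hℓP', huP'⟩ := hP'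
  have := hPmax.isPrime
  have := hPmax'.isPrime
  have hfin : IsOfFinOrder u := isOfFinOrder_iff_pow_eq_one.2 ⟨m, hm, hum⟩
  have hu1 : u = 1 := hfin.eq_one_of_sub_one_mem_of_natCast_mem hℓ hℓ' hne hℓP huP hℓP' huP'
  have hαβ : α / β = 1 := by rw [← hu, hu1]; rfl
  have hβ : β ≠ 0 := by
    rintro rfl
    simp at hαβ
  exact (div_eq_one_iff_eq hβ).1 hαβ

/-- Let `ℓ ≠ ℓ'` be prime numbers and `α, β` nonzero elements of a number field `K` such that
`α/β` is a root of unity which is congruent to `1` modulo some prime of `K` above `ℓ` and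
congruent to `1` modulo some prime of `K` above `ℓ'`.  Then `α = β`. -/
theorem stmt_14 (K : Type*) [Field K] [NumberField K] (ℓ ℓ' : ℕ)
    (hℓ : ℓ.Prime) (hℓ' : ℓ'.Prime) (hne : ℓ ≠ ℓ')
    (α β : K) (hα : α ≠ 0) (hβ : β ≠ 0)
    (u : 𝓞 K) (hu : (u : K) = α / β)
    (hroot : ∃ m : ℕ, 1 ≤ m ∧ u ^ m = 1)
    (hP : ∃ P : Ideal (𝓞 K), P.IsMaximal ∧ (ℓ : 𝓞 K) ∈ P ∧ u - 1 ∈ P)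
    (hP' : ∃ P' : Ideal (𝓞 K), P'.IsMaximal ∧ (ℓ' : 𝓞 K) ∈ P' ∧ u - 1 ∈ P') :
    α = β :=
  stmt_14_general K ℓ ℓ' hℓ hℓ' hne α β u hu hroot hP hP'
end
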